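/- For all n and all s, q: r_n(q^2 s, q) = (1 - q s) r_n(q s, q) + q^{n+1} s r_n(s, q), where r_n(s,q) is the Rogers-Szegő polynomial. -/

import Mathlib

/-!
The Pascal recurrence `[n+1, k+1] = [n, k] + q^(k+1) [n, k+1]` gives
`r_{n+1}(s) = r_n(qs) + s r_n(s)`. Expanding all three terms of the identity for `n + 1` this way,
it becomes the identity for `n` at `qs` plus `qs` times the identity for `n` at `s`.
-/

open Finset

/-- Gaussian (q-)binomial coefficient, defined over any commutative ring by the
Pascal-type recurrence `[n+1, k+1] = [n, k] + q^(k+1) * [n, k+1]`. -/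
def qbinom {R : Type*} [CommRing R] (q : R) : ℕ → ℕ → R
  | _, 0 => 1
  | 0, _ + 1 => 0
  | n + 1, k + 1 => qbinom q n k + q ^ (k + 1) * qbinom q n (k + 1)
/-- Rogers-Szegő polynomial `r_n(s,q) = ∑_{j=0}^n [n,j]_q s^j`. -/
def rs {R : Type*} [CommRing R] (n : ℕ) (s q : R) : R :=
  ∑ j ∈ Finset.range (n + 1), qbinom q n j * s ^ j

section

variable {R : Type*} [CommRing R]

@[simp]
theorem qbinom_zero_right (q : R) (n : ℕ) : qbinom q n 0 = 1 := by
  cases n <;> rfl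

theorem qbinom_succ_succ (q : R) (n k : ℕ) :
    qbinom q (n + 1) (k + 1) = qbinom q n k + q ^ (k + 1) * qbinom q n (k + 1) :=
  rfl

theorem qbinom_eq_zero_of_lt (q : R) {n k : ℕ} (h : n < k) : qbinom q n k = 0 := by
  induction n generalizing k with
  | zero =>
    obtain ⟨k, rfl⟩ := Nat.exists_eq_succ_of_ne_zero (by omega : k ≠ 0)
    rfl
  | succ n ih =>
    obtain ⟨k, rfl⟩ := Nat.exists_eq_succ_of_ne_zero (by omega : k ≠ 0)
    rw [qbinom_succ_succ, ih (by omega), ih (by omega), mul_zero, add_zero]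

theorem rs_eq_sum_range {n m : ℕ} (h : n < m) (s q : R) :
    rs n s q = ∑ j ∈ range m, qbinom q n j * s ^ j :=
  sum_subset (range_subset_range.2 h) fun j _ hj => by
    rw [qbinom_eq_zero_of_lt q (by simpa using hj), zero_mul]

theorem rs_succ (n : ℕ) (s q : R) : rs (n + 1) s q = rs n (q * s) q + s * rs n s q := by
  have hshift : ∀ j ∈ range (n + 1),
      qbinom q (n + 1) (j + 1) * s ^ (j + 1) =
        qbinom q n (j + 1) * (q * s) ^ (j + 1) + s * (qbinom q n j * s ^ j) :=
    fun j _ => by rw [qbinom_succ_succ]; ring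
  rw [rs, sum_range_succ', sum_congr rfl hshift, sum_add_distrib, ← mul_sum, ← rs,
    rs_eq_sum_range (m := n + 2) (by omega) (q * s), sum_range_succ' _ (n + 1)]
  simp only [qbinom_zero_right, pow_zero]
  ring

end

theorem stmt6 {R : Type*} [CommRing R] (s q : R) (n : ℕ) :
    rs n (q ^ 2 * s) q = (1 - q * s) * rs n (q * s) q + q ^ (n + 1) * s * rs n s q := by
  induction n generalizing s with
  | zero => simp [rs]
  | succ n ih =>
    have hqs := ih (q * s)
    rw [show q * (q * s) = q ^ 2 * s by ring] at hqs
    rw [rs_succ, rs_succ, rs_succ, show q * (q ^ 2 * s) = q ^ 2 * (q * s) by ring,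
      show q * (q * s) = q ^ 2 * s by ring]
    linear_combination hqs + q * s * ih s
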